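/- arXiv:math/0207256 — 2 statements merged into one kernel-verified Lean document; each statement's English description precedes it below -/
import Mathlib

section
/- The lattice L(u,v) ⊂ ℝ³ generated by the vectors (u,v,0), (u,−v,0), (0,u,v), (0,u,−v) with u,v > 0 has, as u/v takes the values 1, 2^(1/2), and 2^(1/4) respectively, Gram matrices proportional to those of the face-centered cubic, body-centered cubic, and mean-centered cuboidal lattices; in particular for u = v = 1 the lattice L(1,1) equals the set {x ∈ ℤ³ : x₁+x₂+x₃ even}, i.e., the f.c.c. lattice D₃. -/
/-- The lattice `L(1,1)`: the ℤ-span of `(1,1,0), (1,-1,0), (0,1,1), (0,1,-1)` in `ℤ³`. -/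
def L11 : Submodule ℤ (Fin 3 → ℤ) :=
  Submodule.span ℤ ({![1,1,0], ![1,-1,0], ![0,1,1], ![0,1,-1]} : Set (Fin 3 → ℤ))

/-- For `u = v = 1`, the lattice generated by `(u,v,0), (u,-v,0), (0,u,v), (0,u,-v)` is the
face-centered cubic lattice `D₃ = {x ∈ ℤ³ : x₀ + x₁ + x₂ even}`. -/
theorem L11_eq_fcc :
    (L11 : Set (Fin 3 → ℤ)) = {x : Fin 3 → ℤ | Even (x 0 + x 1 + x 2)} := by
  ext x
  simp only [SetLike.mem_coe, Set.mem_setOf_eq]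
  constructor
  · intro hx
    induction hx using Submodule.span_induction with
    | mem v hv =>
      rcases hv with h | h | h | h <;> subst h <;> decide
    | zero => simp
    | add a b _ _ ha hb =>
      have := ha.add hb
      simpa [add_assoc, add_left_comm, add_comm] using this
    | smul c a _ ha =>
      simpa [Pi.smul_apply, smul_eq_mul, ← mul_add] using ha.mul_left c
  · rintro ⟨k, hk⟩
    have hx : x = k • ![1,1,0] + (x 0 - k) • ![1,-1,0]
        + (0 : ℤ) • ![0,1,1] + (-(x 2)) • ![0,1,-1] := by
      funext i
      fin_cases i <;> simp <;> omega
    rw [hx]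
    apply Submodule.add_mem _ (Submodule.add_mem _ (Submodule.add_mem _ _ _) _) _ <;>
      exact Submodule.smul_mem _ _ (Submodule.subset_span (by simp))
end

section
/- The Best code C₁₀, obtained by applying the Gray map 0→00, 1→01, 2→11, 3→10 coordinatewise to the 40 quaternary words (a,b,c,d,e) ∈ (ℤ/4ℤ)⁵ with b,c,d ∈ {1,3}, a = c−d, e = b+c, together with all their cyclic shifts, is a binary code of length 10 with exactly 40 codewords and minimum Hamming distance 4. -/
/-- The Gray map `0 → 00, 1 → 01, 2 → 11, 3 → 10`. -/
def grayMap : ZMod 4 → Fin 2 → ZMod 2 := fun z =>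
  if z = 0 then ![0, 0] else if z = 1 then ![0, 1] else if z = 2 then ![1, 1] else ![1, 0]

/-- The defining quaternary words `(a,b,c,d,e)` with `b,c,d ∈ {1,3} = {±1}`,
`a = c - d`, `e = b + c`. -/
def bestBaseWords : Set (Fin 5 → ZMod 4) :=
  {w | w 1 ∈ ({1, 3} : Set (ZMod 4)) ∧ w 2 ∈ ({1, 3} : Set (ZMod 4)) ∧
       w 3 ∈ ({1, 3} : Set (ZMod 4)) ∧ w 0 = w 2 - w 3 ∧ w 4 = w 1 + w 2}

/-- Cyclic shift of a 5-tuple by `k`. -/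
def cycShift (k : Fin 5) (w : Fin 5 → ZMod 4) : Fin 5 → ZMod 4 := fun i => w (i + k)

/-- Apply the Gray map coordinatewise to a quaternary 5-tuple, giving a binary 10-tuple. -/
def grayWord (w : Fin 5 → ZMod 4) : Fin 10 → ZMod 2 := fun i =>
  grayMap (w (finProdFinEquiv.symm (Fin.cast (by norm_num) i : Fin (5 * 2))).1) (finProdFinEquiv.symm (Fin.cast (by norm_num) i : Fin (5 * 2))).2

/-- The Best code `C₁₀`: Gray images of all cyclic shifts of the base words. -/
def bestCode : Set (Fin 10 → ZMod 2) :=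
  {v | ∃ w ∈ bestBaseWords, ∃ k : Fin 5, v = grayWord (cycShift k w)}

def bval (b : Bool) : ZMod 4 := if b then 1 else 3

def baseOf (b c d : Bool) : Fin 5 → ZMod 4 :=
  ![bval c - bval d, bval b, bval c, bval d, bval b + bval c]

lemma baseOf_mem (b c d : Bool) : baseOf b c d ∈ bestBaseWords := by
  cases b <;> cases c <;> cases d <;>
    exact ⟨by simp [baseOf, bval], by simp [baseOf, bval], by simp [baseOf, bval],
      by simp [baseOf, bval], by simp [baseOf, bval]⟩

def codeFinset : Finset (Fin 10 → ZMod 2) :=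
  (Finset.univ : Finset (Bool × Bool × Bool × Fin 5)).image
    fun p => grayWord (cycShift p.2.2.2 (baseOf p.1 p.2.1 p.2.2.1))

lemma bestCode_eq : bestCode = ↑codeFinset := by
  ext v
  simp only [bestCode, codeFinset, Set.mem_setOf_eq, Finset.coe_image, Finset.coe_univ,
    Set.image_univ, Set.mem_range, Prod.exists]
  constructor
  · rintro ⟨w, ⟨h1, h2, h3, ha, he⟩, k, rfl⟩
    rcases h1 with h1 | h1 <;> rcases h2 with h2 | h2 <;> rcases h3 with h3 | h3
    · exact ⟨true, true, true, k, by
        have : w = baseOf true true true := by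
          funext i; fin_cases i <;> simp_all [baseOf, bval]
        rw [this]⟩
    · exact ⟨true, true, false, k, by
        have : w = baseOf true true false := by
          funext i; fin_cases i <;> simp_all [baseOf, bval]
        rw [this]⟩
    · exact ⟨true, false, true, k, by
        have : w = baseOf true false true := by
          funext i; fin_cases i <;> simp_all [baseOf, bval]
        rw [this]⟩
    · exact ⟨true, false, false, k, by
        have : w = baseOf true false false := by
          funext i; fin_cases i <;> simp_all [baseOf, bval]
        rw [this]⟩
    · exact ⟨false, true, true, k, by
        have : w = baseOf false true true := by
          funext i; fin_cases i <;> simp_all [baseOf, bval]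
        rw [this]⟩
    · exact ⟨false, true, false, k, by
        have : w = baseOf false true false := by
          funext i; fin_cases i <;> simp_all [baseOf, bval]
        rw [this]⟩
    · exact ⟨false, false, true, k, by
        have : w = baseOf false false true := by
          funext i; fin_cases i <;> simp_all [baseOf, bval]
        rw [this]⟩
    · exact ⟨false, false, false, k, by
        have : w = baseOf false false false := by
          funext i; fin_cases i <;> simp_all [baseOf, bval]
        rw [this]⟩
  · rintro ⟨b, c, d, k, rfl⟩
    exact ⟨baseOf b c d, baseOf_mem b c d, k, rfl⟩

lemma pair_lb : ∀ p q : Bool × Bool × Bool × Fin 5,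
    grayWord (cycShift p.2.2.2 (baseOf p.1 p.2.1 p.2.2.1)) ≠
      grayWord (cycShift q.2.2.2 (baseOf q.1 q.2.1 q.2.2.1)) →
    4 ≤ hammingDist (grayWord (cycShift p.2.2.2 (baseOf p.1 p.2.1 p.2.2.1)))
      (grayWord (cycShift q.2.2.2 (baseOf q.1 q.2.1 q.2.2.1))) := by decide

/-- The Best code is a binary code of length 10 with exactly 40 codewords and
minimum Hamming distance 4. -/
theorem bestCode_card_and_min_distance :
    bestCode.ncard = 40 ∧
    IsLeast {d : ℕ | ∃ u ∈ bestCode, ∃ v ∈ bestCode, u ≠ v ∧ hammingDist u v = d} 4 := by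
  rw [bestCode_eq]
  refine ⟨by rw [Set.ncard_coe_finset]; decide, ?_, ?_⟩
  · refine ⟨grayWord (cycShift 0 (baseOf true true true)), ?_,
      grayWord (cycShift 0 (baseOf true true false)), ?_, by decide, by decide⟩
    · exact Finset.mem_coe.2 (Finset.mem_image.2 ⟨(true, true, true, 0), Finset.mem_univ _, rfl⟩)
    · exact Finset.mem_coe.2 (Finset.mem_image.2 ⟨(true, true, false, 0), Finset.mem_univ _, rfl⟩)
  · rintro n ⟨u, hu, v, hv, hne, rfl⟩
    obtain ⟨p, -, rfl⟩ := Finset.mem_image.1 (Finset.mem_coe.1 hu)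
    obtain ⟨q, -, rfl⟩ := Finset.mem_image.1 (Finset.mem_coe.1 hv)
    exact pair_lb p q hne
end
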